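/- Let l ≥ 2 be an integer, let O be a finite set of objects, and let there be n ≥ 2 agents, where each agent i ∈ {1, …, n} has an additive valuation V_i : 2^O → ℝ≥0 (so V_i(A ∪ B) = V_i(A) + V_i(B) for disjoint A, B ⊆ O). Then there exists a partition of the entire set O into n pairwise-disjoint bundles Z_1 ⊔ ⋯ ⊔ Z_n = O such that for every agent i: V_i(Z_i) ≥ MMS_i^{l−1,ln−2}(O). -/

import Mathlib

/-- The `l`-out-of-`d` maximin share of an agent with valuation `Vi` over the whole
finite set of objects `α`: the maximum, over all partitions of the objects into `d`
pairwise-disjoint subsets, of the minimum, over all unions of `l` of the subsets,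
of the value of that union. -/
noncomputable def MMS {α : Type*} [Fintype α] [DecidableEq α]
    (Vi : Finset α → ℝ) (l d : ℕ) : ℝ :=
  sSup { t : ℝ | ∃ P : Fin d → Finset α,
    (∀ i j, i ≠ j → Disjoint (P i) (P j)) ∧
    Finset.univ.biUnion P = Finset.univ ∧
    t = sInf { u : ℝ | ∃ S : Finset (Fin d), S.card = l ∧ u = Vi (S.biUnion P) } }

/-!
Let `m = l - 1` and `d = l n - 2`, write `τ j` for the maximin share of agent `j` and `Q j` for
a partition of the goods into `d` parts attaining it, so that any `m` parts of `Q j` are worth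
at least `τ j` to `j`; averaging, any `r ≥ m` of them are worth at least `r τ j / m`. Additive
valuations are sums of item weights.

Agent `i₀` cuts the goods along `P = Q i₀`; a part is large for `j` if `j` values it at least
`τ j / m`. Among the other agents with `τ j > 0`, take a largest set `D` having at most `m |D|`
large parts in total. By Hall's theorem every other such agent gets `m` of its large parts and
`i₀` gets `m` more parts, all outside the large parts of the agents of `D`. These share the
remaining goods by bag filling, one good at a time: an agent who misses a bag loses less than
`τ j` plus one good. This succeeds because, for `j ∈ D`, the remaining goods minus any `|D| - 1`
of them are still worth `|D| τ j`: the parts of `Q j` avoiding those goods are worth at least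
`(d - |D| + 1) τ j / m`, while each allocated part of `P` is worth less than `τ j / m`. This
count is where `d = l n - 2` enters.
-/

open Finset Function

section

variable {ι κ α : Type*}

theorem sum_singleton_of_additive [DecidableEq α] {V : Finset α → ℝ}
    (hadd : ∀ A B, Disjoint A B → V (A ∪ B) = V A + V B) (A : Finset α) :
    V A = ∑ x ∈ A, V {x} := by
  induction A using Finset.induction_on with
  | empty => simpa using hadd ∅ ∅ (disjoint_empty_left ∅)
  | insert a s ha ih =>
    rw [sum_insert ha, ← ih, ← hadd _ _ (disjoint_singleton_left.2 ha), insert_eq]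

def IsPartition [Fintype ι] [Fintype α] [DecidableEq α] (P : ι → Finset α) : Prop :=
  Pairwise (Disjoint on P) ∧ univ.biUnion P = univ

theorem disjoint_biUnion_of_pairwise [DecidableEq α] {P : ι → Finset α}
    (hP : Pairwise (Disjoint on P)) {A B : Finset ι} (h : Disjoint A B) :
    Disjoint (A.biUnion P) (B.biUnion P) := by
  simp only [disjoint_biUnion_left, disjoint_biUnion_right]
  exact fun j hj i hi => hP (ne_of_mem_of_not_mem hi (disjoint_right.1 h hj))

theorem pairwise_disjoint_update {f : ι → Finset α} [DecidableEq ι]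
    (hf : Pairwise (Disjoint on f)) {a : ι} {s : Finset α} (hs : ∀ i ≠ a, Disjoint s (f i)) :
    Pairwise (Disjoint on update f a s) := by
  intro i j hij
  rcases eq_or_ne i a with rfl | hi
  · simpa [onFun, hij.symm] using hs j hij.symm
  rcases eq_or_ne j a with rfl | hj
  · simpa [onFun, hi] using (hs i hi).symm
  simpa [onFun, hi, hj] using hf hij

theorem pairwise_disjoint_union [DecidableEq α] {f g : ι → Finset α} (hf : Pairwise (Disjoint on f))
    (hg : Pairwise (Disjoint on g)) (hfg : ∀ i j, Disjoint (f i) (g j)) :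
    Pairwise (Disjoint on fun i => f i ∪ g i) := fun i j hij =>
  disjoint_union_left.2
    ⟨disjoint_union_right.2 ⟨hf hij, hfg i j⟩, disjoint_union_right.2 ⟨(hfg j i).symm, hg hij⟩⟩

theorem exists_isPartition_le [Fintype ι] [DecidableEq ι] [Nonempty ι] [Fintype α] [DecidableEq α]
    {Y : ι → Finset α} (hY : Pairwise (Disjoint on Y)) :
    ∃ Z : ι → Finset α, IsPartition Z ∧ ∀ i, Y i ⊆ Z i := by
  obtain ⟨a⟩ := ‹Nonempty ι›
  refine ⟨update Y a (Y a ∪ (univ \ univ.biUnion Y)), ⟨?_, ?_⟩, fun i => ?_⟩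
  · refine pairwise_disjoint_update hY fun i hi => disjoint_union_left.2 ⟨hY hi.symm, ?_⟩
    exact disjoint_of_subset_right (subset_biUnion_of_mem Y (mem_univ i)) sdiff_disjoint
  · refine eq_univ_of_forall fun x => mem_biUnion.2 ?_
    by_cases hx : x ∈ univ.biUnion Y
    · obtain ⟨i, -, hi⟩ := mem_biUnion.1 hx
      rcases eq_or_ne i a with rfl | h
      · exact ⟨i, mem_univ _, by simp [hi]⟩
      · exact ⟨i, mem_univ _, by simpa [h] using hi⟩
    · exact ⟨a, mem_univ _, by simp [hx]⟩
  · rcases eq_or_ne i a with rfl | h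
    · simp
    · simp [h]

theorem exists_isPartition_forall_MMS_le [Fintype α] [DecidableEq α] (V : Finset α → ℝ)
    (l : ℕ) {d : ℕ} (hd : 0 < d) :
    ∃ P : Fin d → Finset α, IsPartition P ∧ ∀ S : Finset (Fin d), #S = l →
      MMS V l d ≤ V (S.biUnion P) := by
  set minUnion : (Fin d → Finset α) → ℝ :=
    fun P => sInf {u | ∃ S : Finset (Fin d), #S = l ∧ u = V (S.biUnion P)}
  set values := {t | ∃ P : Fin d → Finset α, (∀ i j, i ≠ j → Disjoint (P i) (P j)) ∧
      univ.biUnion P = univ ∧ t = minUnion P}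
  have hfin : values.Finite :=
    (Set.finite_range minUnion).subset (by rintro t ⟨P, -, -, rfl⟩; exact ⟨P, rfl⟩)
  have hne : values.Nonempty := by
    refine ⟨_, update (fun _ => ∅) ⟨0, hd⟩ univ,
      fun i j hij => pairwise_disjoint_update (fun _ _ _ => disjoint_bot_left)
        (fun _ _ => disjoint_bot_right) hij, eq_univ_of_forall fun x => ?_, rfl⟩
    exact mem_biUnion.2 ⟨⟨0, hd⟩, mem_univ _, by simp⟩
  obtain ⟨P, hdisj, hcov, hP⟩ := hne.csSup_mem hfin
  refine ⟨P, ⟨fun i j hij => hdisj i j hij, hcov⟩, fun S hS => ?_⟩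
  rw [MMS, hP]
  refine csInf_le ?_ ⟨S, hS, rfl⟩
  exact ((Set.finite_range fun S : Finset (Fin d) => V (S.biUnion P)).subset
    (by rintro u ⟨S, -, rfl⟩; exact ⟨S, rfl⟩)).bddBelow

theorem card_mul_le_mul_sum_of_le_sum_powersetCard [DecidableEq ι] (w : ι → ℝ) {m : ℕ}
    {τ : ℝ} (hm : 0 < m) {I : Finset ι} (hI : m ≤ #I)
    (h : ∀ S ⊆ I, #S = m → τ ≤ ∑ i ∈ S, w i) : #I * τ ≤ m * ∑ i ∈ I, w i := by
  induction I using Finset.strongInduction with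
  | H I ih =>
    rcases hI.eq_or_lt with hI | hI
    · rw [← hI]
      exact mul_le_mul_of_nonneg_left (h I subset_rfl hI.symm) (Nat.cast_nonneg _)
    -- Every `I.erase i` satisfies the bound, and summing over `i` counts `∑ I` `#I - 1` times.
    have herase : ∀ i ∈ I, (#I - 1 : ℝ) * τ ≤ m * ((∑ j ∈ I, w j) - w i) := fun i hi => by
      have := ih (I.erase i) (erase_ssubset hi) (by rw [card_erase_of_mem hi]; omega)
        fun S hS => h S (hS.trans (erase_subset i I))
      rwa [card_erase_of_mem hi, Nat.cast_sub (by omega), sum_erase_eq_sub hi, Nat.cast_one] at this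
    have hsum := sum_le_sum herase
    rw [sum_const, nsmul_eq_mul, ← mul_sum, sum_sub_distrib, sum_const, nsmul_eq_mul] at hsum
    have hpos : (0 : ℝ) < #I - 1 := by
      have : (1 : ℝ) < #I := by exact_mod_cast (by omega : 1 < #I)
      linarith
    nlinarith

theorem card_sub_card_mul_le_mul_sum_compl [Fintype α] [DecidableEq α] {d m : ℕ} (hm : 0 < m)
    {w : α → ℝ} (hw : ∀ x, 0 ≤ w x) {τ : ℝ} (hτ : 0 ≤ τ) {Q : Fin d → Finset α}
    (hQ : IsPartition Q) (hQτ : ∀ S : Finset (Fin d), #S = m → τ ≤ ∑ x ∈ S.biUnion Q, w x)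
    {F : Finset α} (hF : #F + m ≤ d) :
    (d - #F : ℝ) * τ ≤ m * ∑ x ∈ univ \ F, w x := by
  set R := univ.filter fun p => Disjoint (Q p) F
  have hRc : #Rᶜ ≤ #F := by
    refine card_le_card_of_forall_subsingleton (fun p x => x ∈ Q p) (fun p hp => ?_)
      fun x _ p hp q hq => ?_
    · simpa [R, not_disjoint_iff, and_comm] using hp
    · by_contra hpq
      exact disjoint_left.1 (hQ.1 hpq) hp.2 hq.2
  have hR : d - #F ≤ #R := by
    have := card_add_card_compl R
    rw [Fintype.card_fin] at this
    omega
  have hRsum := card_mul_le_mul_sum_of_le_sum_powersetCard (fun p => ∑ x ∈ Q p, w x) hm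
    (I := R) (by omega) fun S _ hS => (hQτ S hS).trans_eq (sum_biUnion (hQ.1.set_pairwise _))
  rw [← sum_biUnion (hQ.1.set_pairwise _)] at hRsum
  have hRF : R.biUnion Q ⊆ univ \ F := fun x hx => by
    obtain ⟨p, hp, hxp⟩ := mem_biUnion.1 hx
    exact mem_sdiff.2 ⟨mem_univ x, disjoint_left.1 (mem_filter.1 hp).2 hxp⟩
  have hcard : (d - #F : ℝ) ≤ #R := by
    have := (Nat.cast_le (α := ℝ)).2 hR
    push_cast [Nat.cast_sub (by omega : #F ≤ d)] at this
    linarith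
  calc (d - #F : ℝ) * τ ≤ #R * τ := mul_le_mul_of_nonneg_right hcard hτ
    _ ≤ m * ∑ x ∈ R.biUnion Q, w x := hRsum
    _ ≤ m * ∑ x ∈ univ \ F, w x := by
      gcongr
      exact fun x _ _ => hw x

theorem mul_add_sum_le_sum_compl_biUnion [Fintype α] [DecidableEq α] {d m k : ℕ} (hm : 0 < m)
    (hk : 0 < k) {w : α → ℝ} (hw : ∀ x, 0 ≤ w x) {τ : ℝ} (hτ : 0 ≤ τ) {Q P : Fin d → Finset α}
    (hQ : IsPartition Q) (hQτ : ∀ S : Finset (Fin d), #S = m → τ ≤ ∑ x ∈ S.biUnion Q, w x)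
    (hP : Pairwise (Disjoint on P)) {C : Finset (Fin d)} (hC : ∀ p ∈ C, m * ∑ x ∈ P p, w x ≤ τ)
    {S : Finset α} (hS : Disjoint S (C.biUnion P)) (hd : k * m + #S + #C ≤ d) :
    k * τ + ∑ x ∈ S, w x ≤ ∑ x ∈ univ \ C.biUnion P, w x := by
  set rest := univ \ (S ∪ C.biUnion P)
  have hroot := card_sub_card_mul_le_mul_sum_compl hm hw hτ hQ hQτ (F := S) (by nlinarith)
  have hCP : m * ∑ x ∈ C.biUnion P, w x ≤ #C * τ := by
    rw [sum_biUnion (hP.set_pairwise _), mul_sum]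
    simpa using sum_le_sum hC
  have hcompl_S : ∑ x ∈ univ \ S, w x = ∑ x ∈ rest, w x + ∑ x ∈ C.biUnion P, w x := by
    rw [← sum_sdiff (subset_sdiff.2 ⟨subset_univ _, hS.symm⟩), sdiff_sdiff_left, sup_eq_union]
  have hcompl_CP : ∑ x ∈ univ \ C.biUnion P, w x = ∑ x ∈ rest, w x + ∑ x ∈ S, w x := by
    rw [← sum_sdiff (subset_sdiff.2 ⟨subset_univ _, hS⟩), sdiff_sdiff_left, sup_eq_union,
      union_comm]
  have hcard : (k * m : ℝ) ≤ d - #S - #C := by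
    have := (Nat.cast_le (α := ℝ)).2 hd
    push_cast at this
    linarith
  have hrest : m * (k * τ) ≤ m * ∑ x ∈ rest, w x := by
    nlinarith [mul_le_mul_of_nonneg_right hcard hτ]
  have := le_of_mul_le_mul_left hrest (by exact_mod_cast hm)
  linarith

theorem exists_subset_le_sum_and_sum_erase_lt [DecidableEq α] {D : Finset ι} (w : ι → α → ℝ)
    {τ : ι → ℝ} (hτ : ∀ j ∈ D, 0 < τ j) {I : Finset α} (h : ∃ j ∈ D, τ j ≤ ∑ x ∈ I, w j x) :
    ∃ B ⊆ I, (∃ j ∈ D, τ j ≤ ∑ x ∈ B, w j x) ∧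
      ∀ j ∈ D, ∃ y ∈ B, ∑ x ∈ B.erase y, w j x < τ j := by
  induction I using Finset.induction_on with
  | empty =>
    obtain ⟨j, hj, hle⟩ := h
    exact absurd hle (by simpa using hτ j hj)
  | insert a s ha ih =>
    by_cases hs : ∃ j ∈ D, τ j ≤ ∑ x ∈ s, w j x
    · obtain ⟨B, hBs, hB⟩ := ih hs
      exact ⟨B, hBs.trans (subset_insert a s), hB⟩
    · simp only [not_exists, not_and, not_le] at hs
      exact ⟨insert a s, subset_rfl, h, fun j hj => ⟨a, mem_insert_self a s, by
        simpa [erase_insert ha] using hs j hj⟩⟩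

theorem exists_pairwise_disjoint_le_sum [DecidableEq ι] [DecidableEq α] (w : ι → α → ℝ)
    {τ : ι → ℝ} {D : Finset ι} (hτ : ∀ j ∈ D, 0 < τ j) {I : Finset α}
    (h : ∀ j ∈ D, ∀ S ⊆ I, #S < #D → #D * τ j + ∑ x ∈ S, w j x ≤ ∑ x ∈ I, w j x) :
    ∃ bag : ι → Finset α, Pairwise (Disjoint on bag) ∧ (∀ j, bag j ⊆ I) ∧
      ∀ j ∈ D, τ j ≤ ∑ x ∈ bag j, w j x := by
  induction D using Finset.strongInduction generalizing I with
  | H D ih =>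
    rcases D.eq_empty_or_nonempty with rfl | hD
    · exact ⟨fun _ => ∅, fun _ _ _ => disjoint_bot_left, fun _ => empty_subset _, by simp⟩
    have hreach : ∃ j ∈ D, τ j ≤ ∑ x ∈ I, w j x := by
      obtain ⟨j, hj⟩ := hD
      have := h j hj ∅ (empty_subset I) (by simpa using ⟨j, hj⟩)
      rw [sum_empty, add_zero] at this
      have h1 : (1 : ℝ) ≤ #D := by exact_mod_cast card_pos.2 ⟨j, hj⟩
      exact ⟨j, hj, by nlinarith [hτ j hj]⟩
    obtain ⟨B, hBI, ⟨j₀, hj₀, hB⟩, hBmin⟩ := exists_subset_le_sum_and_sum_erase_lt w hτ hreach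
    -- Giving `B` to `j₀` costs any other agent `j` less than `τ j` plus the one good `y`.
    obtain ⟨bag, hdisj, hsub, hval⟩ := ih (D.erase j₀) (erase_ssubset hj₀) (I := I \ B)
      (fun j hj => hτ j (mem_of_mem_erase hj)) fun j hj S hS hcard => by
        obtain ⟨y, hyB, hy⟩ := hBmin j (mem_of_mem_erase hj)
        have hyS : y ∉ S := fun hyS => (mem_sdiff.1 (hS hyS)).2 hyB
        rw [card_erase_of_mem hj₀] at hcard ⊢
        have := h j (mem_of_mem_erase hj) (insert y S) (insert_subset (hBI hyB)
          (hS.trans sdiff_subset)) (by rw [card_insert_of_notMem hyS]; omega)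
        rw [sum_insert hyS, ← sum_sdiff hBI, ← add_sum_erase B _ hyB] at this
        rw [Nat.cast_sub (by omega)]
        push_cast
        linarith
    refine ⟨update bag j₀ B, pairwise_disjoint_update hdisj fun i _ =>
      disjoint_of_subset_right (hsub i) disjoint_sdiff, fun j => ?_, fun j hj => ?_⟩
    · rcases eq_or_ne j j₀ with rfl | hne
      · simpa using hBI
      · simpa [hne] using (hsub j).trans sdiff_subset
    · rcases eq_or_ne j j₀ with rfl | hne
      · simpa using hB
      · simpa [hne] using hval j (mem_erase.2 ⟨hne, hj⟩)

theorem exists_pairwise_disjoint_le_sum_of_disjoint_biUnion [Fintype α] [DecidableEq α]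
    [DecidableEq ι] {d m : ℕ} (hm : 0 < m) {w : ι → α → ℝ} (hw : ∀ i x, 0 ≤ w i x)
    {τ : ι → ℝ} {D : Finset ι} (hτ : ∀ j ∈ D, 0 < τ j) {Q : ι → Fin d → Finset α}
    (hQ : ∀ j ∈ D, IsPartition (Q j))
    (hQτ : ∀ j ∈ D, ∀ S : Finset (Fin d), #S = m → τ j ≤ ∑ x ∈ S.biUnion (Q j), w j x)
    {P : Fin d → Finset α} (hP : Pairwise (Disjoint on P)) {C : Finset (Fin d)}
    (hC : ∀ j ∈ D, ∀ p ∈ C, m * ∑ x ∈ P p, w j x ≤ τ j) (hd : #D * m + #D + #C ≤ d + 1) :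
    ∃ bag : ι → Finset α, Pairwise (Disjoint on bag) ∧ (∀ j, Disjoint (bag j) (C.biUnion P)) ∧
      ∀ j ∈ D, τ j ≤ ∑ x ∈ bag j, w j x := by
  obtain ⟨bag, hdisj, hbag, hval⟩ := exists_pairwise_disjoint_le_sum w hτ
    (I := univ \ C.biUnion P) fun j hj S hSI hS =>
      mul_add_sum_le_sum_compl_biUnion hm (card_pos.2 ⟨j, hj⟩) (hw j) (hτ j hj).le (hQ j hj)
        (hQτ j hj) hP (hC j hj) (disjoint_of_subset_left hSI sdiff_disjoint) (by omega)
  exact ⟨bag, hdisj, fun j => disjoint_of_subset_left (hbag j) sdiff_disjoint, hval⟩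

theorem exists_subset_card_biUnion_le_mul_card_and_hall_sdiff [DecidableEq ι] [DecidableEq κ]
    (X : Finset ι) (L : ι → Finset κ) (m : ℕ) :
    ∃ D ⊆ X, #(D.biUnion L) ≤ m * #D ∧
      ∀ T ⊆ X \ D, m * #T ≤ #(T.biUnion L \ D.biUnion L) := by
  obtain ⟨D, hD, hmax⟩ := exists_max_image
    (X.powerset.filter fun D => #(D.biUnion L) ≤ m * #D) card ⟨∅, by simp⟩
  rw [mem_filter, mem_powerset] at hD
  refine ⟨D, hD.1, hD.2, fun T hT => ?_⟩
  by_contra! hlt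
  have hDT : Disjoint D T := disjoint_of_subset_right hT disjoint_sdiff
  -- Otherwise `D ∪ T` would be a larger set with few neighbours.
  have hDT_mem : D ∪ T ∈ X.powerset.filter fun D => #(D.biUnion L) ≤ m * #D := by
    refine mem_filter.2 ⟨mem_powerset.2 (union_subset hD.1 (hT.trans sdiff_subset)), ?_⟩
    rw [union_biUnion, ← union_sdiff_self_eq_union, card_union_of_disjoint hDT, mul_add]
    exact (card_union_le _ _).trans (by omega)
  have hT0 : #T = 0 := by
    have := hmax _ hDT_mem
    rw [card_union_of_disjoint hDT] at this
    omega
  rw [hT0, mul_zero] at hlt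
  exact Nat.not_lt_zero _ hlt

theorem exists_pairwise_disjoint_subset_card_eq_of_hall [DecidableEq ι] [DecidableEq κ]
    {A : Finset ι} {L : ι → Finset κ} {m : ℕ} (h : ∀ T ⊆ A, m * #T ≤ #(T.biUnion L)) :
    ∃ g : ι → Finset κ, Pairwise (Disjoint on g) ∧ (∀ i, g i ⊆ L i) ∧
      (∀ i ∈ A, #(g i) = m) ∧ ∀ i ∉ A, g i = ∅ := by
  -- Hall's theorem for `m` copies of each agent.
  obtain ⟨f, hf, hfL⟩ := (all_card_le_biUnion_card_iff_exists_injective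
    fun q : A × Fin m => L q.1).1 fun s => by
      have hcard : #s ≤ m * #(s.image fun q => (q.1 : ι)) := by
        refine card_le_mul_card_image s m fun i _ => ?_
        refine (card_le_card_of_injOn Prod.snd (fun _ _ => mem_univ _) ?_).trans_eq
          (by simp)
        intro q hq q' hq' hqq'
        exact Prod.ext (Subtype.ext ((mem_filter.1 hq).2.trans (mem_filter.1 hq').2.symm)) hqq'
      have hT := h (s.image fun q => (q.1 : ι)) fun i hi => by
        obtain ⟨q, -, rfl⟩ := mem_image.1 hi
        exact q.1.2
      rw [image_biUnion] at hT
      exact hcard.trans hT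
  refine ⟨fun i => if hi : i ∈ A then univ.image fun r => f (⟨i, hi⟩, r) else ∅,
    fun i j hij => ?_, fun i => ?_, fun i hi => ?_, fun i hi => dif_neg hi⟩
  · simp only [onFun]
    split_ifs with hi hj hj
    · refine disjoint_left.2 fun x hx hx' => hij ?_
      obtain ⟨r, -, rfl⟩ := mem_image.1 hx
      obtain ⟨r', -, hr⟩ := mem_image.1 hx'
      exact congrArg (fun q : A × Fin m => (q.1 : ι)) (hf hr).symm
    all_goals simp
  · dsimp only
    split_ifs with hi
    · exact image_subset_iff.2 fun r _ => hfL _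
    · exact empty_subset _
  · dsimp only
    rw [dif_pos hi, card_image_of_injective _ fun r r' hr => (Prod.mk.inj (hf hr)).2, card_univ,
      Fintype.card_fin]

theorem mul_card_le_card_biUnion_insert [DecidableEq ι] [DecidableEq κ] {A : Finset ι}
    {L : ι → Finset κ} {m : ℕ} {a : ι} (h : ∀ T ⊆ A, m * #T ≤ #(T.biUnion L))
    (ha : m * (#A + 1) ≤ #(L a)) : ∀ T ⊆ insert a A, m * #T ≤ #(T.biUnion L) := by
  intro T hT
  by_cases haT : a ∈ T
  · calc m * #T ≤ m * (#A + 1) :=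
          Nat.mul_le_mul_left m ((card_le_card hT).trans (card_insert_le a A))
      _ ≤ #(L a) := ha
      _ ≤ #(T.biUnion L) := card_le_card (subset_biUnion_of_mem L haT)
  · exact h T ((subset_insert_iff_of_notMem haT).1 hT)

theorem exists_subset_and_pairwise_disjoint_card_eq [Fintype ι] [DecidableEq ι] [Fintype κ]
    [DecidableEq κ] {X : Finset ι} {a : ι} (ha : a ∉ X) (L : ι → Finset κ) {m : ℕ}
    (hcard : m * (#X + 1) ≤ Fintype.card κ) :
    ∃ D ⊆ X, ∃ g : ι → Finset κ, Pairwise (Disjoint on g) ∧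
      #(univ.biUnion g) + m * #D ≤ m * (#X + 1) ∧ (∀ i ∈ insert a (X \ D), #(g i) = m) ∧
      (∀ i ∈ X \ D, g i ⊆ L i) ∧ ∀ j ∈ D, Disjoint (univ.biUnion g) (L j) := by
  obtain ⟨D, hDX, hDcard, hhall⟩ := exists_subset_card_biUnion_le_mul_card_and_hall_sdiff X L m
  set N := D.biUnion L
  set L' := update (fun i => L i \ N) a (univ \ N)
  have haD : a ∉ X \ D := fun h => ha (mem_sdiff.1 h).1
  have hL'N : ∀ i, Disjoint (L' i) N := fun i => by
    rcases eq_or_ne i a with rfl | hi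
    · simpa [L'] using sdiff_disjoint
    · simpa [L', hi] using sdiff_disjoint
  have hXD : m * (#(X \ D) + 1) + m * #D = m * (#X + 1) := by
    rw [← card_sdiff_add_card_eq_card hDX]
    ring
  obtain ⟨g, hgdisj, hgL', hgcard, hg0⟩ := exists_pairwise_disjoint_subset_card_eq_of_hall
    (A := insert a (X \ D)) (L := L') (m := m) <| by
    refine mul_card_le_card_biUnion_insert (fun T hT => ?_) ?_
    · have hT' : ∀ i ∈ T, L' i = L i \ N := fun i hi =>
        update_of_ne (ne_of_mem_of_not_mem (hT hi) haD) _ _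
      rw [biUnion_congr rfl hT']
      convert hhall T hT using 2
      ext p
      simp only [mem_biUnion, mem_sdiff]
      aesop
    · simp only [L', update_self, card_univ_sdiff]
      omega
  refine ⟨D, hDX, g, hgdisj, ?_, hgcard, fun i hi => (hgL' i).trans ?_, fun j hj => ?_⟩
  · calc #(univ.biUnion g) + m * #D ≤ ∑ i, #(g i) + m * #D := by gcongr; exact card_biUnion_le
      _ = ∑ i ∈ insert a (X \ D), #(g i) + m * #D := by
        rw [sum_subset (subset_univ (insert a (X \ D))) fun i _ hi => by rw [hg0 i hi, card_empty]]
      _ = m * (#X + 1) := by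
        rw [sum_congr rfl hgcard, sum_const, card_insert_of_notMem haD, smul_eq_mul, mul_comm,
          hXD]
  · simp [L', ne_of_mem_of_not_mem (mem_sdiff.1 hi).1 ha]
  · exact disjoint_of_subset_right (subset_biUnion_of_mem L hj)
      ((disjoint_biUnion_left _ _ _).2 fun i _ => disjoint_of_subset_left (hgL' i) (hL'N i))

theorem le_sum_biUnion_of_card_eq [DecidableEq α] {P : κ → Finset α}
    (hP : Pairwise (Disjoint on P)) {w : α → ℝ} {τ : ℝ} {m : ℕ} (hm : 0 < m) {S : Finset κ}
    (hS : #S = m) (h : ∀ p ∈ S, τ ≤ m * ∑ x ∈ P p, w x) : τ ≤ ∑ x ∈ S.biUnion P, w x := by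
  have := sum_le_sum h
  rw [sum_const, hS, nsmul_eq_mul, ← mul_sum, ← sum_biUnion (hP.set_pairwise _)] at this
  exact le_of_mul_le_mul_left this (by exact_mod_cast hm)

theorem exists_pairwise_disjoint_le_sum_of_isPartition [Fintype ι] [DecidableEq ι] [Fintype α]
    [DecidableEq α] {m d : ℕ} (hm : 0 < m) (hn : 2 ≤ Fintype.card ι)
    (hd : m * Fintype.card ι + Fintype.card ι ≤ d + 2) (w : ι → α → ℝ) (hw : ∀ i x, 0 ≤ w i x)
    (τ : ι → ℝ) (Q : ι → Fin d → Finset α) (hQ : ∀ i, IsPartition (Q i))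
    (hQτ : ∀ i (S : Finset (Fin d)), #S = m → τ i ≤ ∑ x ∈ S.biUnion (Q i), w i x) :
    ∃ Y : ι → Finset α, Pairwise (Disjoint on Y) ∧ ∀ i, τ i ≤ ∑ x ∈ Y i, w i x := by
  obtain ⟨i₀⟩ : Nonempty ι := Fintype.card_pos_iff.1 (by omega)
  set P := Q i₀
  set X := (univ.erase i₀).filter fun i => 0 < τ i
  have hX : #X + 1 ≤ Fintype.card ι := by
    have := card_le_card (show X ⊆ univ.erase i₀ from filter_subset _ _)
    rw [card_erase_of_mem (mem_univ _), card_univ] at this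
    omega
  have hi₀X : i₀ ∉ X := fun h => (mem_erase.1 (mem_filter.1 h).1).1 rfl
  obtain ⟨D, hDX, g, hgdisj, hgcard, hgm, hgL, hgD⟩ := exists_subset_and_pairwise_disjoint_card_eq
    hi₀X (fun j => univ.filter fun p => τ j ≤ m * ∑ x ∈ P p, w j x) (m := m)
    (by rw [Fintype.card_fin]; nlinarith)
  have hDτ : ∀ j ∈ D, 0 < τ j := fun j hj => (mem_filter.1 (hDX hj)).2
  have hDX' : #D ≤ #X := card_le_card hDX
  obtain ⟨bag, hbdisj, hbC, hbag⟩ := exists_pairwise_disjoint_le_sum_of_disjoint_biUnion hm hw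
    hDτ (fun j _ => hQ j) (fun j _ => hQτ j) (P := P) (hQ i₀).1 (C := univ.biUnion g)
    (fun j hj p hp => (by simpa using disjoint_left.1 (hgD j hj) hp : _ < _).le) (by nlinarith)
  refine ⟨fun i => (g i).biUnion P ∪ bag i, pairwise_disjoint_union
    (fun i j hij => disjoint_biUnion_of_pairwise (hQ i₀).1 (hgdisj hij)) hbdisj fun i j =>
      disjoint_of_subset_left (biUnion_subset_biUnion_of_subset_left P
        (subset_biUnion_of_mem g (mem_univ i))) (hbC j).symm,
    fun i => ?_⟩
  have hmono : ∀ s ⊆ (g i).biUnion P ∪ bag i,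
      ∑ x ∈ s, w i x ≤ ∑ x ∈ (g i).biUnion P ∪ bag i, w i x :=
    fun s hs => sum_le_sum_of_subset_of_nonneg hs fun x _ _ => hw i x
  by_cases hi₀ : i = i₀
  · rw [hi₀] at hmono ⊢
    exact (hQτ i₀ _ (hgm i₀ (mem_insert_self _ _))).trans (hmono _ subset_union_left)
  by_cases hiXD : i ∈ X \ D
  · refine (le_sum_biUnion_of_card_eq (hQ i₀).1 hm (hgm i (mem_insert_of_mem hiXD))
      fun p hp => ?_).trans (hmono _ subset_union_left)
    exact (mem_filter.1 (hgL i hiXD hp)).2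
  by_cases hiD : i ∈ D
  · exact (hbag i hiD).trans (hmono _ subset_union_right)
  have hiX : i ∉ X := fun h => hiXD (mem_sdiff.2 ⟨h, hiD⟩)
  have hτi : τ i ≤ 0 := by simpa [X, hi₀] using hiX
  exact hτi.trans (sum_nonneg fun x _ => hw i x)

end

/-- for `l ≥ 2` and `n ≥ 2` agents with nonnegative additive valuations
over a finite set of objects, there is a partition of all the objects into `n` bundles
giving each agent `i` at least its (l-1)-out-of-(ln-2) maximin share. -/
theorem exists_l_sub_one_out_of_ln_sub_two_MMS_allocation
    {α : Type*} [Fintype α] [DecidableEq α] (l : ℕ) (hl : 2 ≤ l)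
    (n : ℕ) (hn : 2 ≤ n)
    (Val : Fin n → Finset α → ℝ)
    (hnonneg : ∀ i A, 0 ≤ Val i A)
    (hadd : ∀ i A B, Disjoint A B → Val i (A ∪ B) = Val i A + Val i B) :
    ∃ Z : Fin n → Finset α,
      (∀ i j, i ≠ j → Disjoint (Z i) (Z j)) ∧
      Finset.univ.biUnion Z = Finset.univ ∧
      ∀ i, MMS (Val i) (l - 1) (l * n - 2) ≤ Val i (Z i) := by
  have hln : (l - 1) * n + n = l * n := by
    rw [Nat.sub_one_mul, Nat.sub_add_cancel (Nat.le_mul_of_pos_left n (by omega))]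
  choose Q hQ hQτ using fun i =>
    exists_isPartition_forall_MMS_le (Val i) (l - 1) (d := l * n - 2)
      (by have := Nat.mul_le_mul hl hn; omega)
  obtain ⟨Y, hYdisj, hY⟩ := exists_pairwise_disjoint_le_sum_of_isPartition (by omega)
    (by rwa [Fintype.card_fin]) (by rw [Fintype.card_fin]; omega) (fun i x => Val i {x})
    (fun i x => hnonneg i {x}) _ Q hQ
    fun i S hS => (hQτ i S hS).trans_eq (sum_singleton_of_additive (hadd i) _)
  have : Nonempty (Fin n) := ⟨⟨0, by omega⟩⟩
  obtain ⟨Z, hZ, hYZ⟩ := exists_isPartition_le hYdisj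
  refine ⟨Z, fun i j hij => hZ.1 hij, hZ.2, fun i => ?_⟩
  rw [sum_singleton_of_additive (hadd i)]
  exact (hY i).trans (sum_le_sum_of_subset_of_nonneg (hYZ i) fun x _ _ => hnonneg i {x})
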